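/- Let α_s, α_t be complex numbers with α_t ≠ 0, and let Ẑ, â be estimates satisfying |Ẑ − α_s α_t*| ≤ 2ε and |â − |α_t|| ≤ √ε, with â > 0 and |α_t| > √ε. Then the estimator α̂_s := Ẑ/â satisfies |α̂_s − e^{−iθ}α_s| ≤ (2√ε·√ε + |α_s|√ε)/â ≤ 3√ε/(|α_t| − √ε), where θ = arg(α_t), provided |α_s| ≤ 1 and ε ≤ 1. -/

import Mathlib

open Matrix BigOperators
open scoped Kronecker ComplexOrder

noncomputable def pauli1 : Fin 4 → Matrix (Fin 2) (Fin 2) ℂ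
  | 0 => 1
  | 1 => !![0, 1; 1, 0]
  | 2 => !![0, -Complex.I; Complex.I, 0]
  | 3 => !![1, 0; 0, -1]

/-- The n-qubit Pauli operator indexed by `s : Fin n → Fin 4`, realized as the
tensor product of single-qubit Pauli matrices (entrywise product formula). -/
noncomputable def pauli {n : ℕ} (s : Fin n → Fin 4) :
    Matrix (Fin n → Fin 2) (Fin n → Fin 2) ℂ :=
  Matrix.of fun i j => ∏ k, pauli1 (s k) (i k) (j k)

/-- The Pauli coefficient `α_s = 2^{-n} Tr(A σ^s)`. -/
noncomputable def pauliCoeff {n : ℕ} (A : Matrix (Fin n → Fin 2) (Fin n → Fin 2) ℂ)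
    (s : Fin n → Fin 4) : ℂ :=
  (A * pauli s).trace / 2 ^ n

/-- Operator norm (largest singular value) of a matrix. -/
noncomputable def opNorm {m : Type*} [Fintype m] [DecidableEq m]
    (A : Matrix m m ℂ) : ℝ :=
  ‖Matrix.toEuclideanCLM (𝕜 := ℂ) A‖

/-- Trace norm `‖A‖₁ = Tr √(AᴴA)`. -/
noncomputable def traceNorm {m : Type*} [Fintype m] [DecidableEq m]
    (A : Matrix m m ℂ) : ℝ :=
  (((Matrix.posSemidef_conjTranspose_mul_self A).isHermitian.eigenvectorUnitary : Matrix m m ℂ) *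
    Matrix.diagonal (((↑) : ℝ → ℂ) ∘ Real.sqrt ∘
      (Matrix.posSemidef_conjTranspose_mul_self A).isHermitian.eigenvalues) *
    (star (Matrix.posSemidef_conjTranspose_mul_self A).isHermitian.eigenvectorUnitary :
      Matrix m m ℂ)).trace.re

theorem Complex.norm_mul_exp_neg_I_mul_arg (x : ℂ) :
    ‖x‖ * Complex.exp (-(Complex.I * x.arg)) = (starRingEnd ℂ) x := by
  conv_rhs => rw [← Complex.norm_mul_exp_arg_mul_I x]
  rw [map_mul, Complex.conj_ofReal, ← Complex.exp_conj, map_mul, Complex.conj_ofReal,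
    Complex.conj_I, mul_neg, mul_comm Complex.I]

theorem Complex.norm_div_ofReal_sub_le {Z w : ℂ} {a b : ℝ} (ha : 0 < a) :
    ‖Z / a - w‖ ≤ (‖Z - b * w‖ + ‖w‖ * |a - b|) / a := by
  have hsplit : Z / a - w = ((Z - b * w) - ((a - b : ℝ) : ℂ) * w) / a := by
    field_simp
    push_cast
    ring
  rw [hsplit, norm_div, Complex.norm_real, Real.norm_of_nonneg ha.le]
  gcongr
  calc ‖(Z - b * w) - ((a - b : ℝ) : ℂ) * w‖
      ≤ ‖Z - b * w‖ + ‖((a - b : ℝ) : ℂ) * w‖ := norm_sub_le _ _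
    _ = ‖Z - b * w‖ + ‖w‖ * |a - b| := by
      rw [norm_mul, Complex.norm_real, Real.norm_eq_abs, mul_comm |a - b|]

theorem ratio_estimator_error_general (αs αt Z : ℂ) (ε a : ℝ)
    (hZ : ‖Z - αs * (starRingEnd ℂ) αt‖ ≤ 2 * ε)
    (ha : |a - ‖αt‖| ≤ Real.sqrt ε)
    (hapos : 0 < a)
    (hαtbig : Real.sqrt ε < ‖αt‖)
    (hαs : ‖αs‖ ≤ 1) (hε0 : 0 ≤ ε) (hε1 : ε ≤ 1) :
    ‖Z / (a : ℂ) - Complex.exp (-(Complex.I * (αt.arg : ℂ))) * αs‖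
        ≤ (2 * Real.sqrt ε * Real.sqrt ε + ‖αs‖ * Real.sqrt ε) / a ∧
    (2 * Real.sqrt ε * Real.sqrt ε + ‖αs‖ * Real.sqrt ε) / a
        ≤ 3 * Real.sqrt ε / (‖αt‖ - Real.sqrt ε) := by
  set r := Real.sqrt ε
  have hrr : 2 * r * r = 2 * ε := by rw [mul_assoc, Real.mul_self_sqrt hε0]
  have hZ' : ‖Z - ‖αt‖ * (Complex.exp (-(Complex.I * αt.arg)) * αs)‖ ≤ 2 * ε := by
    rwa [← mul_assoc, Complex.norm_mul_exp_neg_I_mul_arg, mul_comm]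
  have hphase : ‖Complex.exp (-(Complex.I * αt.arg)) * αs‖ = ‖αs‖ := by
    rw [norm_mul, mul_comm Complex.I, ← neg_mul, ← Complex.ofReal_neg,
      Complex.norm_exp_ofReal_mul_I, one_mul]
  refine ⟨?_, ?_⟩
  · refine (Complex.norm_div_ofReal_sub_le (b := ‖αt‖) hapos).trans ?_
    rw [hphase, hrr]
    gcongr
  · have hr1 : r ≤ 1 := Real.sqrt_le_one.mpr hε1
    have hlow : ‖αt‖ - r ≤ a := by linarith [(abs_le.mp ha).1]
    have hnum : 2 * r * r + ‖αs‖ * r ≤ 3 * r := by nlinarith [Real.sqrt_nonneg ε]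
    calc (2 * r * r + ‖αs‖ * r) / a ≤ 3 * r / a := by gcongr
      _ ≤ 3 * r / (‖αt‖ - r) := by gcongr

/-- Error propagation for the ratio-based Pauli coefficient
estimator `α̂_s = Ẑ/â`. -/
theorem ratio_estimator_error (αs αt Z : ℂ) (ε a : ℝ)
    (hαt : αt ≠ 0)
    (hZ : ‖Z - αs * (starRingEnd ℂ) αt‖ ≤ 2 * ε)
    (ha : |a - ‖αt‖| ≤ Real.sqrt ε)
    (hapos : 0 < a)
    (hαtbig : Real.sqrt ε < ‖αt‖)
    (hαs : ‖αs‖ ≤ 1) (hε0 : 0 ≤ ε) (hε1 : ε ≤ 1) :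
    ‖Z / (a : ℂ) - Complex.exp (-(Complex.I * (αt.arg : ℂ))) * αs‖
        ≤ (2 * Real.sqrt ε * Real.sqrt ε + ‖αs‖ * Real.sqrt ε) / a ∧
    (2 * Real.sqrt ε * Real.sqrt ε + ‖αs‖ * Real.sqrt ε) / a
        ≤ 3 * Real.sqrt ε / (‖αt‖ - Real.sqrt ε) :=
  ratio_estimator_error_general αs αt Z ε a hZ ha hapos hαtbig hαs hε0 hε1
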